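/- For every nonzero ordinal θ, both Λ_θ and K_θ are closed under intersection with a cylinder: for every S ∈ Λ_θ (respectively S ∈ K_θ) and every finite word h ∈ C*, the set cyl(h) ∩ S belongs to Λ_θ (respectively to K_θ), where cyl(h) = {hρ : ρ ∈ C^ω}. -/

import Mathlib

open Set Topology

noncomputable section

def seqTop (C : Type) : TopologicalSpace (ℕ → C) :=
  @Pi.topologicalSpace ℕ (fun _ => C) (fun _ => ⊥)

def pref {C : Type} (ρ : ℕ → C) (n : ℕ) : List C :=
  (List.range n).map ρ

def OrdEven (θ : Ordinal) : Prop :=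
  ∃ (lam : Ordinal) (k : ℕ), (lam = 0 ∨ Order.IsSuccLimit lam) ∧ θ = lam + 2 * (k : Ordinal)

def HDiffSet {C : Type} (θ : Ordinal) (O : Ordinal → Set (ℕ → C)) : Set (ℕ → C) :=
  {ρ | (∃ η < θ, ρ ∈ O η) ∧ (OrdEven (sInf {η | η < θ ∧ ρ ∈ O η}) ↔ ¬ OrdEven θ)}

def Dclass (C : Type) (θ : Ordinal) : Set (Set (ℕ → C)) :=
  {S | ∃ O : Ordinal → Set (ℕ → C),
      (∀ η < θ, IsOpen[seqTop C] (O η)) ∧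
      (∀ η₁ η₂, η₁ ≤ η₂ → η₂ < θ → O η₁ ⊆ O η₂) ∧
      S = HDiffSet θ O}

def FineLambda (C : Type) : Ordinal → Set (Set (ℕ → C))
  | θ =>
    if θ = 1 then {S | IsOpen[seqTop C] S}
    else if 1 < θ then
      {S | ∃ (I : Type) (T O : I → Set (ℕ → C)) (η : I → {x : Ordinal // x < θ}),
        (∀ i, IsOpen[seqTop C] (O i)) ∧ (Pairwise fun i j => Disjoint (O i) (O j)) ∧
        (∀ i, T i ⊆ O i) ∧ S = ⋃ i, T i ∧
        ∀ i, T i ∈ FineLambda C (η i) ∨ (T i)ᶜ ∈ FineLambda C (η i)}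
    else ∅
termination_by θ => θ
decreasing_by all_goals exact (η i).2

def FineK (C : Type) (θ : Ordinal) : Set (Set (ℕ → C)) :=
  {S | Sᶜ ∈ FineLambda C θ}

/-- Concatenation of a finite word and an infinite sequence. -/
def catSeq {C : Type} (h : List C) (ρ : ℕ → C) : ℕ → C := fun n =>
  if hn : n < h.length then h.get ⟨n, hn⟩ else ρ (n - h.length)

/-- The cylinder generated by a finite word `h`: all infinite words beginning with `h`. -/
def cylSet {C : Type} (h : List C) : Set (ℕ → C) :=
  {x | ∃ ρ : ℕ → C, x = catSeq h ρ}

/-! Cylinders are clopen, and everything below works for an arbitrary clopen `U`. Intersecting an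
open-union representation `⩁ Tᵢ ⊆ ⩁ Oᵢ` of `S` with `U` gives the representation `⩁ (U ∩ Tᵢ)` with
open sets `U ∩ Oᵢ`, the pieces staying in their levels by induction. For the complement classes,
`(U ∩ S)ᶜ = Uᶜ ∪ (U ∩ Sᶜ)` is an open union, since the open set `Uᶜ` is separated from `U`. -/

section FineHierarchy

attribute [local instance] seqTop

variable {C : Type}

lemma cylSet_eq_iInter (h : List C) :
    cylSet h = ⋂ i : Fin h.length, {x : ℕ → C | x i = h.get i} := by
  ext x
  simp only [cylSet, mem_ofPred_eq, mem_iInter]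
  constructor
  · rintro ⟨ρ, rfl⟩ i
    simp [catSeq, i.isLt]
  · intro hx
    refine ⟨fun n => x (n + h.length), funext fun n => ?_⟩
    by_cases hn : n < h.length
    · simpa [catSeq, hn] using hx ⟨n, hn⟩
    · simp [catSeq, hn, Nat.sub_add_cancel (le_of_not_gt hn)]

lemma isClopen_cylSet (h : List C) : IsClopen (cylSet h) := by
  let _ : TopologicalSpace C := ⊥
  have : DiscreteTopology C := ⟨rfl⟩
  rw [cylSet_eq_iInter]
  exact isClopen_iInter_of_finite fun i =>
    (isClopen_discrete {h.get i}).preimage (continuous_apply (i : ℕ))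

variable (C) in
lemma fineLambda_zero : FineLambda C 0 = ∅ := by
  rw [FineLambda]; simp

variable (C) in
lemma fineLambda_one : FineLambda C 1 = {S | IsOpen S} := by
  rw [FineLambda]; simp

variable (C) in
lemma fineLambda_of_one_lt {θ : Ordinal} (hθ : 1 < θ) :
    FineLambda C θ =
      {S | ∃ (I : Type) (T O : I → Set (ℕ → C)) (η : I → {x : Ordinal // x < θ}),
        (∀ i, IsOpen (O i)) ∧ (Pairwise fun i j => Disjoint (O i) (O j)) ∧
        (∀ i, T i ⊆ O i) ∧ S = ⋃ i, T i ∧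
        ∀ i, T i ∈ FineLambda C (η i) ∨ (T i)ᶜ ∈ FineLambda C (η i)} := by
  rw [FineLambda, if_neg hθ.ne', if_pos hθ]

/-- `V` joins the open-union representation of `A` as one more piece, of level `1`. -/
lemma union_mem_fineLambda_of_disjoint {θ : Ordinal} {U V A : Set (ℕ → C)}
    (hU : IsOpen U) (hV : IsOpen V) (hUV : Disjoint V U) (hAU : A ⊆ U)
    (hA : A ∈ FineLambda C θ) : V ∪ A ∈ FineLambda C θ := by
  rcases lt_trichotomy θ 1 with hθ | rfl | hθ
  · rw [Order.lt_one_iff.mp hθ, fineLambda_zero] at hA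
    exact hA.elim
  · rw [fineLambda_one] at hA ⊢
    exact hV.union hA
  rw [fineLambda_of_one_lt C hθ] at hA ⊢
  obtain ⟨I, T, O, η, hO, hdisj, hTO, rfl, hT⟩ := hA
  have hTU : ∀ i, T i ⊆ U := fun i => (subset_iUnion T i).trans hAU
  refine ⟨Option I, fun o => o.elim V T, fun o => o.elim V fun i => U ∩ O i,
    fun o => o.elim ⟨1, hθ⟩ η, ?_, ?_, ?_, ?_, ?_⟩
  · rintro (_ | i)
    exacts [hV, hU.inter (hO i)]
  · rintro (_ | i) (_ | j) hij
    · exact absurd rfl hij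
    · exact hUV.mono_right inter_subset_left
    · exact hUV.symm.mono_left inter_subset_left
    · exact (hdisj fun hij' => hij (congrArg some hij')).mono
        inter_subset_right inter_subset_right
  · rintro (_ | i)
    exacts [subset_rfl, subset_inter (hTU i) (hTO i)]
  · rw [iUnion_option]
    rfl
  · rintro (_ | i)
    · left
      show V ∈ FineLambda C 1
      rw [fineLambda_one]
      exact hV
    · exact hT i

lemma inter_mem_fineK_of_inter_mem_fineLambda {θ : Ordinal} {U S : Set (ℕ → C)}
    (hU : IsClopen U) (hΛ : U ∩ Sᶜ ∈ FineLambda C θ) : U ∩ S ∈ FineK C θ := by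
  have hsplit : (U ∩ S)ᶜ = Uᶜ ∪ (U ∩ Sᶜ) := by
    ext x
    by_cases hx : x ∈ U <;> simp [hx]
  show (U ∩ S)ᶜ ∈ FineLambda C θ
  rw [hsplit]
  exact union_mem_fineLambda_of_disjoint hU.isOpen hU.compl.isOpen disjoint_compl_left
    inter_subset_left hΛ

lemma inter_mem_fineLambda_of_isClopen {U : Set (ℕ → C)} (hU : IsClopen U) (θ : Ordinal) :
    ∀ S ∈ FineLambda C θ, U ∩ S ∈ FineLambda C θ := by
  induction θ using WellFoundedLT.induction with
  | _ θ IH =>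
  intro S hS
  rcases lt_trichotomy θ 1 with hθ | rfl | hθ
  · rw [Order.lt_one_iff.mp hθ, fineLambda_zero] at hS
    exact hS.elim
  · rw [fineLambda_one] at hS ⊢
    exact hU.isOpen.inter hS
  rw [fineLambda_of_one_lt C hθ] at hS ⊢
  obtain ⟨I, T, O, η, hO, hdisj, hTO, rfl, hT⟩ := hS
  refine ⟨I, fun i => U ∩ T i, fun i => U ∩ O i, η, fun i => hU.isOpen.inter (hO i),
    fun i j hij => (hdisj hij).mono inter_subset_right inter_subset_right,
    fun i => inter_subset_inter_right U (hTO i), inter_iUnion U T, fun i => ?_⟩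
  rcases hT i with hTi | hTi
  · exact Or.inl (IH _ (η i).2 _ hTi)
  · exact Or.inr (inter_mem_fineK_of_inter_mem_fineLambda hU (IH _ (η i).2 _ hTi))

lemma inter_mem_fineK_of_isClopen {U S : Set (ℕ → C)} (hU : IsClopen U) {θ : Ordinal}
    (hS : S ∈ FineK C θ) : U ∩ S ∈ FineK C θ :=
  inter_mem_fineK_of_inter_mem_fineLambda hU (inter_mem_fineLambda_of_isClopen hU θ _ hS)

end FineHierarchy

theorem statement17_general (C : Type) (θ : Ordinal) :
    (∀ S : Set (ℕ → C), S ∈ FineLambda C θ → ∀ h : List C,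
        cylSet h ∩ S ∈ FineLambda C θ) ∧
      (∀ S : Set (ℕ → C), S ∈ FineK C θ → ∀ h : List C,
        cylSet h ∩ S ∈ FineK C θ) :=
  ⟨fun S hS h => inter_mem_fineLambda_of_isClopen (isClopen_cylSet h) θ S hS,
    fun _ hS h => inter_mem_fineK_of_isClopen (isClopen_cylSet h) hS⟩

/-- Each level `Λ_θ` and `K_θ` is closed under intersection with a cylinder. -/
theorem statement17 (C : Type) (θ : Ordinal) (hθ : θ ≠ 0) :
    (∀ S : Set (ℕ → C), S ∈ FineLambda C θ → ∀ h : List C,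
        cylSet h ∩ S ∈ FineLambda C θ) ∧
      (∀ S : Set (ℕ → C), S ∈ FineK C θ → ∀ h : List C,
        cylSet h ∩ S ∈ FineK C θ) :=
  statement17_general C θ
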